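/- Let 0 < λ < n. The iterated maximal operator M² = M ∘ M is bounded from the Zygmund–Morrey space M_{L(1+log⁺L),λ}(ℝⁿ) to the weak Zygmund–Morrey space WM_{L(1+log⁺L),λ}(ℝⁿ): there is c > 0, independent of f, such that ‖M²f‖_{WM_{L(1+log⁺L),λ}} ≤ c ‖f‖_{M_{L(1+log⁺L),λ}} for all f. -/

import Mathlib

open MeasureTheory ENNReal Set

noncomputable section

/-- `ℝⁿ` with the Euclidean metric. -/
abbrev Rn (n : ℕ) : Type := EuclideanSpace ℝ (Fin n)

/-- The axis-parallel cube with center `c` and side length `h`. -/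
def zCube {n : ℕ} (c : Rn n) (h : ℝ) : Set (Rn n) := {x | ∀ i, |x i - c i| ≤ h / 2}

/-- `log⁺ t = max (log t) 0`. -/
def logPlus (t : ℝ) : ℝ := max (Real.log t) 0

/-- The Hardy–Littlewood maximal operator of an `ℝ≥0∞`-valued function:
`sup_{Q ∋ x} |Q|⁻¹ ∫_Q g`, the supremum over all axis-parallel cubes containing `x`. -/
def maxE {n : ℕ} (g : Rn n → ℝ≥0∞) (x : Rn n) : ℝ≥0∞ :=
  ⨆ (c : Rn n) (h : ℝ) (_ : 0 < h) (_ : x ∈ zCube c h),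
    (ENNReal.ofReal (h ^ n))⁻¹ * ∫⁻ y in zCube c h, g y

/-- The Hardy–Littlewood maximal operator of a real function. -/
def HLM {n : ℕ} (f : Rn n → ℝ) (x : Rn n) : ℝ≥0∞ :=
  maxE (fun y => ENNReal.ofReal |f y|) x

/-- The fractional maximal operator `M_α` applied to an `ℝ≥0∞`-valued function:
`sup_{Q ∋ x} |Q|^{(α-n)/n} ∫_Q g`. -/
def fracMaxE {n : ℕ} (α : ℝ) (g : Rn n → ℝ≥0∞) (x : Rn n) : ℝ≥0∞ :=
  ⨆ (c : Rn n) (h : ℝ) (_ : 0 < h) (_ : x ∈ zCube c h),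
    ENNReal.ofReal (h ^ (α - (n : ℝ))) * ∫⁻ y in zCube c h, g y

/-- The maximal commutator `C_b(f)(x) = sup_{Q ∋ x} |Q|⁻¹ ∫_Q |b x - b y| |f y| dy`. -/
def maxComm {n : ℕ} (b f : Rn n → ℝ) (x : Rn n) : ℝ≥0∞ :=
  ⨆ (c : Rn n) (h : ℝ) (_ : 0 < h) (_ : x ∈ zCube c h),
    (ENNReal.ofReal (h ^ n))⁻¹ * ∫⁻ y in zCube c h, ENNReal.ofReal (|b x - b y| * |f y|)

/-- The mean value `f_Q = |Q|⁻¹ ∫_Q f` of `f` over the cube with center `c`, side `h`. -/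
def cubeMean {n : ℕ} (f : Rn n → ℝ) (c : Rn n) (h : ℝ) : ℝ :=
  (h ^ n)⁻¹ * ∫ y in zCube c h, f y

/-- The mean oscillation `|Q|⁻¹ ∫_Q |b - b_Q|` of `b` over a cube. -/
def oscAvg {n : ℕ} (b : Rn n → ℝ) (c : Rn n) (h : ℝ) : ℝ≥0∞ :=
  (ENNReal.ofReal (h ^ n))⁻¹ * ∫⁻ y in zCube c h, ENNReal.ofReal |b y - cubeMean b c h|

/-- The BMO seminorm `‖b‖_* = sup_Q |Q|⁻¹ ∫_Q |b - b_Q|`. -/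
def bmoNorm {n : ℕ} (b : Rn n → ℝ) : ℝ≥0∞ :=
  ⨆ (c : Rn n) (h : ℝ) (_ : 0 < h), oscAvg b c h

/-- Morrey norm `‖g‖_{M_{p,λ}} = sup_{x, r>0} r^{(λ-n)/p} (∫_{B(x,r)} g^p)^{1/p}`
for an `ℝ≥0∞`-valued function. -/
def morreyE {n : ℕ} (p lam : ℝ) (g : Rn n → ℝ≥0∞) : ℝ≥0∞ :=
  ⨆ (x : Rn n) (r : ℝ) (_ : 0 < r),
    ENNReal.ofReal (r ^ ((lam - n) / p)) * (∫⁻ y in Metric.ball x r, g y ^ p) ^ (1 / p)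

/-- Morrey norm of a real function. -/
def morrey {n : ℕ} (p lam : ℝ) (f : Rn n → ℝ) : ℝ≥0∞ :=
  morreyE p lam (fun y => ENNReal.ofReal |f y|)

/-- The Zygmund function `Φ(t) = t (1 + log⁺ t)`, extended to `ℝ≥0∞`. -/
def zygFnE (t : ℝ≥0∞) : ℝ≥0∞ := t * (1 + ENNReal.ofReal (logPlus t.toReal))

/-- The Luxemburg-type `L(1+log⁺L)`-average of `g` over a cube:
`inf {α > 0 : |Q|⁻¹ ∫_Q Φ(g/α) ≤ 1}` (as an element of `ℝ≥0∞`, `= ∞` if no such `α`). -/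
def zygAvgE {n : ℕ} (g : Rn n → ℝ≥0∞) (c : Rn n) (h : ℝ) : ℝ≥0∞ :=
  sInf {a : ℝ≥0∞ | ∃ α : ℝ, 0 < α ∧ a = ENNReal.ofReal α ∧
    (ENNReal.ofReal (h ^ n))⁻¹ * ∫⁻ y in zCube c h, zygFnE (g y / ENNReal.ofReal α) ≤ 1}

/-- The `L(1+log⁺L)`-average of a real function over a cube. -/
def zygAvg {n : ℕ} (f : Rn n → ℝ) (c : Rn n) (h : ℝ) : ℝ≥0∞ :=
  zygAvgE (fun y => ENNReal.ofReal |f y|) c h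

/-- The weak `L(1+log⁺L)`-average of `g` over a cube:
`inf {α > 0 : ∀ t > 0, |Q|⁻¹ |{x ∈ Q : g x > α t}| ≤ (1/t)(1 + log⁺(1/t))}`. -/
def weakZygAvgE {n : ℕ} (g : Rn n → ℝ≥0∞) (c : Rn n) (h : ℝ) : ℝ≥0∞ :=
  sInf {a : ℝ≥0∞ | ∃ α : ℝ, 0 < α ∧ a = ENNReal.ofReal α ∧ ∀ t : ℝ, 0 < t →
    (ENNReal.ofReal (h ^ n))⁻¹ * volume {x ∈ zCube c h | ENNReal.ofReal (α * t) < g x}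
      ≤ ENNReal.ofReal ((1 / t) * (1 + logPlus (1 / t)))}

/-- The Zygmund–Morrey norm `sup_Q |Q|^{λ/n} ‖g‖_{L(1+log⁺L),Q}` of an `ℝ≥0∞`-valued function. -/
def zygMorreyE {n : ℕ} (lam : ℝ) (g : Rn n → ℝ≥0∞) : ℝ≥0∞ :=
  ⨆ (c : Rn n) (h : ℝ) (_ : 0 < h), ENNReal.ofReal (h ^ lam) * zygAvgE g c h

/-- The Zygmund–Morrey norm of a real function. -/
def zygMorrey {n : ℕ} (lam : ℝ) (f : Rn n → ℝ) : ℝ≥0∞ :=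
  zygMorreyE lam (fun y => ENNReal.ofReal |f y|)

/-- The weak Zygmund–Morrey norm `sup_Q |Q|^{λ/n} ‖g‖_{WL(1+log⁺L),Q}`. -/
def weakZygMorreyE {n : ℕ} (lam : ℝ) (g : Rn n → ℝ≥0∞) : ℝ≥0∞ :=
  ⨆ (c : Rn n) (h : ℝ) (_ : 0 < h), ENNReal.ofReal (h ^ lam) * weakZygAvgE g c h

/-- The commutator `[M,b]f(x) = M(bf)(x) - b(x) Mf(x)`. -/
def commMb {n : ℕ} (b f : Rn n → ℝ) (x : Rn n) : ℝ :=
  (HLM (fun y => b y * f y) x).toReal - b x * (HLM f x).toReal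

/-- `f` is radially decreasing: `f x = φ ‖x‖` with `φ` nonnegative and
nonincreasing on `(0,∞)`, measurable. -/
def RadDec {n : ℕ} (f : Rn n → ℝ) : Prop :=
  ∃ φ : ℝ → ℝ, Measurable φ ∧ (∀ r : ℝ, 0 < r → 0 ≤ φ r) ∧
    AntitoneOn φ (Set.Ioi 0) ∧ ∀ x, f x = φ ‖x‖

/-- `∫_Q |f| (1 + log⁺(|f| / |f|_Q))`. -/
def zygInt {n : ℕ} (f : Rn n → ℝ) (c : Rn n) (h : ℝ) : ℝ≥0∞ :=
  ∫⁻ y in zCube c h,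
    ENNReal.ofReal (|f y| * (1 + logPlus (|f y| / cubeMean (fun z => |f z|) c h)))

/-- `∫_0^t φ(ρ) ρ^{n-1} dρ`. -/
def radInt1 (n : ℕ) (φ : ℝ → ℝ) (t : ℝ) : ℝ≥0∞ :=
  ∫⁻ ρ in Set.Ioc (0 : ℝ) t, ENNReal.ofReal (φ ρ * ρ ^ (n - 1))

/-- `∫_0^x (1/t) ∫_0^t φ(ρ) ρ^{n-1} dρ dt`. -/
def radInt2 (n : ℕ) (φ : ℝ → ℝ) (x : ℝ) : ℝ≥0∞ :=
  ∫⁻ t in Set.Ioc (0 : ℝ) x, (ENNReal.ofReal t)⁻¹ * radInt1 n φ t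

/-- `∫_0^x (1/y) ∫_0^y (1/t) ∫_0^t φ(ρ) ρ^{n-1} dρ dt dy`. -/
def radInt3 (n : ℕ) (φ : ℝ → ℝ) (x : ℝ) : ℝ≥0∞ :=
  ∫⁻ y in Set.Ioc (0 : ℝ) x, (ENNReal.ofReal y)⁻¹ * radInt2 n φ y

/-- `sup_{x>0} x^{λ-n} ∫_0^x (1/t) ∫_0^t φ(ρ) ρ^{n-1} dρ dt`. -/
def radSup2 (n : ℕ) (lam : ℝ) (φ : ℝ → ℝ) : ℝ≥0∞ :=
  ⨆ (x : ℝ) (_ : 0 < x), ENNReal.ofReal (x ^ (lam - (n : ℝ))) * radInt2 n φ x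

/-- `sup_{x>0} x^{λ-n} ∫_0^x (1/y) ∫_0^y (1/t) ∫_0^t φ(ρ) ρ^{n-1} dρ dt dy`. -/
def radSup3 (n : ℕ) (lam : ℝ) (φ : ℝ → ℝ) : ℝ≥0∞ :=
  ⨆ (x : ℝ) (_ : 0 < x), ENNReal.ofReal (x ^ (lam - (n : ℝ))) * radInt3 n φ x

/-! `M²` factors through the Morrey space `M_{1,λ}` of functions whose cube averages decay like
`|Q|^{-λ/n}`. On a cube `Q` split `g = g 1_{3Q} + g 1_{(3Q)ᶜ}`: on `Q`, `M (g 1_{(3Q)ᶜ})` is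
dominated by averages of `g` over concentric cubes larger than `Q`, which decay like `|Q|^{-λ/n}`
because `λ ≥ 0`, while Stein's inequality `∫_Q M (g 1_{3Q}) ≲ |Q| ‖g‖_{L log L, 3Q}` bounds the
local part; hence `M g ∈ M_{1,λ}`. The same splitting with the weak type `(1,1)` inequality in
place of Stein's gives a weak `L¹` bound `|{x ∈ Q : M F x > s}| ≲ |Q|^{1-λ/n} ‖F‖_{M_{1,λ}} / s`,
which is stronger than the weak `L(1+log⁺L)` bound since `1/t ≤ (1/t)(1 + log⁺(1/t))`. -/

section Cubes

variable {n : ℕ}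

lemma isClosed_zCube (c : Rn n) (h : ℝ) : IsClosed (zCube c h) := by
  have : zCube c h = ⋂ i, (fun x : Rn n => |x i - c i|) ⁻¹' Iic (h / 2) := by
    ext x; simp [zCube]
  rw [this]
  exact isClosed_iInter fun i => isClosed_Iic.preimage
    (((EuclideanSpace.proj i).continuous.sub continuous_const).abs)

lemma measurableSet_zCube (c : Rn n) (h : ℝ) : MeasurableSet (zCube c h) :=
  (isClosed_zCube c h).measurableSet

lemma volume_zCube (c : Rn n) {h : ℝ} (hh : 0 ≤ h) :
    volume (zCube c h) = ENNReal.ofReal (h ^ n) := by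
  have : zCube c h = (MeasurableEquiv.toLp 2 (Fin n → ℝ)).symm ⁻¹'
      Set.univ.pi fun i => Icc (c i - h / 2) (c i + h / 2) := by
    ext x
    have hx : ∀ i, (MeasurableEquiv.toLp 2 (Fin n → ℝ)).symm x i = x i := fun _ => rfl
    simp only [zCube, mem_preimage, mem_univ_pi, mem_Icc, mem_ofPred_eq, abs_le, hx]
    exact forall_congr' fun i => by constructor <;> rintro ⟨_, _⟩ <;> constructor <;> linarith
  rw [this, (EuclideanSpace.volume_preserving_symm_measurableEquiv_toLp (Fin n)).measure_preimage
    (MeasurableSet.univ_pi fun i => measurableSet_Icc).nullMeasurableSet, volume_pi_pi]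
  simp [Real.volume_Icc, ← ENNReal.ofReal_pow hh]

lemma zCube_mono (c : Rn n) {h h' : ℝ} (hle : h ≤ h') : zCube c h ⊆ zCube c h' :=
  fun _ hy i => (hy i).trans (by linarith)

lemma zCube_subset_of_mem_of_mem {c₁ c₂ z : Rn n} {h₁ h₂ : ℝ}
    (hz₁ : z ∈ zCube c₁ h₁) (hz₂ : z ∈ zCube c₂ h₂) : zCube c₁ h₁ ⊆ zCube c₂ (2 * h₁ + h₂) := by
  intro y hy i
  have hy := abs_le.mp (hy i)
  have h₁ := abs_le.mp (hz₁ i)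
  have h₂ := abs_le.mp (hz₂ i)
  exact abs_le.mpr ⟨by linarith, by linarith⟩

def openCube (c : Rn n) (h : ℝ) : Set (Rn n) := {x | ∀ i, |x i - c i| < h / 2}

lemma isOpen_openCube (c : Rn n) (h : ℝ) : IsOpen (openCube c h) := by
  have : openCube c h = ⋂ i, (fun x : Rn n => |x i - c i|) ⁻¹' Iio (h / 2) := by
    ext x; simp [openCube]
  rw [this]
  exact isOpen_iInter_of_finite fun i => isOpen_Iio.preimage
    (((EuclideanSpace.proj i).continuous.sub continuous_const).abs)

lemma openCube_subset_zCube (c : Rn n) (h : ℝ) : openCube c h ⊆ zCube c h :=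
  fun _ hx i => (hx i).le

lemma mem_openCube_of_mem_zCube {c x : Rn n} {h h' : ℝ} (hx : x ∈ zCube c h) (hh : h < h') :
    x ∈ openCube c h' :=
  fun i => (hx i).trans_lt (by linarith)

end Cubes

section MaximalFunction

variable {n : ℕ}

def cubeAvg (g : Rn n → ℝ≥0∞) (c : Rn n) (h : ℝ) : ℝ≥0∞ :=
  (ENNReal.ofReal (h ^ n))⁻¹ * ∫⁻ y in zCube c h, g y

lemma ofReal_pow_ne_zero {h : ℝ} (hh : 0 < h) : ENNReal.ofReal (h ^ n) ≠ 0 :=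
  (ENNReal.ofReal_pos.mpr (pow_pos hh n)).ne'

lemma lintegral_zCube_eq_mul_cubeAvg (g : Rn n → ℝ≥0∞) (c : Rn n) {h : ℝ} (hh : 0 < h) :
    ∫⁻ y in zCube c h, g y = ENNReal.ofReal (h ^ n) * cubeAvg g c h := by
  rw [cubeAvg, ← mul_assoc, ENNReal.mul_inv_cancel (ofReal_pow_ne_zero hh) ENNReal.ofReal_ne_top,
    one_mul]

lemma lt_cubeAvg_iff {g : Rn n → ℝ≥0∞} {c : Rn n} {h : ℝ} {s : ℝ≥0∞} (hh : 0 < h) :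
    s < cubeAvg g c h ↔ s * ENNReal.ofReal (h ^ n) < ∫⁻ y in zCube c h, g y := by
  rw [cubeAvg, ← ENNReal.div_eq_inv_mul,
    ENNReal.lt_div_iff_mul_lt (Or.inl (ofReal_pow_ne_zero hh)) (Or.inl ENNReal.ofReal_ne_top)]

lemma cubeAvg_mono {g g' : Rn n → ℝ≥0∞} {c : Rn n} {h : ℝ}
    (hgg : ∀ y ∈ zCube c h, g y ≤ g' y) : cubeAvg g c h ≤ cubeAvg g' c h :=
  mul_le_mul_right (setLIntegral_mono' (measurableSet_zCube c h) hgg) _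

lemma cubeAvg_add_const (g : Rn n → ℝ≥0∞) (c : Rn n) {h : ℝ} (hh : 0 < h) (u : ℝ≥0∞) :
    cubeAvg (fun y => g y + u) c h = cubeAvg g c h + u := by
  rw [cubeAvg, lintegral_add_right' _ aemeasurable_const, setLIntegral_const,
    volume_zCube c hh.le, mul_add, mul_comm u, ← mul_assoc,
    ENNReal.inv_mul_cancel (ofReal_pow_ne_zero hh) ENNReal.ofReal_ne_top, one_mul, cubeAvg]

lemma le_maxE {g : Rn n → ℝ≥0∞} {x c : Rn n} {h : ℝ} (hh : 0 < h) (hx : x ∈ zCube c h) :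
    cubeAvg g c h ≤ maxE g x :=
  le_iSup₂_of_le c h (le_iSup₂_of_le (f := fun _ (_ : x ∈ zCube c h) => cubeAvg g c h) hh hx le_rfl)

lemma maxE_le {g : Rn n → ℝ≥0∞} {x : Rn n} {A : ℝ≥0∞}
    (hA : ∀ c h, 0 < h → x ∈ zCube c h → cubeAvg g c h ≤ A) : maxE g x ≤ A :=
  iSup₂_le fun c h => iSup₂_le fun hh hx => hA c h hh hx

lemma exists_lt_cubeAvg_of_lt_maxE {g : Rn n → ℝ≥0∞} {x : Rn n} {s : ℝ≥0∞}
    (hs : s < maxE g x) : ∃ c h, 0 < h ∧ x ∈ zCube c h ∧ s < cubeAvg g c h := by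
  obtain ⟨c, hc⟩ := lt_iSup_iff.mp hs
  obtain ⟨h, hh⟩ := lt_iSup_iff.mp hc
  obtain ⟨hpos, hh⟩ := lt_iSup_iff.mp hh
  obtain ⟨hx, hs⟩ := lt_iSup_iff.mp hh
  exact ⟨c, h, hpos, hx, hs⟩

lemma maxE_congr_ae {g g' : Rn n → ℝ≥0∞} (hgg : g =ᵐ[volume] g') : maxE g = maxE g' := by
  have : ∀ s : Set (Rn n), ∫⁻ y in s, g y = ∫⁻ y in s, g' y :=
    fun s => lintegral_congr_ae (ae_restrict_of_ae hgg)
  funext x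
  simp only [maxE, this]

lemma exists_lt_cubeAvg_openCube {g : Rn n → ℝ≥0∞} {x : Rn n} {s : ℝ≥0∞}
    (hs : s < maxE g x) (hs_top : s ≠ ⊤) :
    ∃ c u, 0 < u ∧ x ∈ openCube c u ∧ s < cubeAvg g c u := by
  obtain ⟨c, h, hh, hx, hsh⟩ := exists_lt_cubeAvg_of_lt_maxE hs
  have hcont : Continuous fun u : ℝ => s * ENNReal.ofReal (u ^ n) :=
    (ENNReal.continuous_const_mul hs_top).comp (ENNReal.continuous_ofReal.comp (continuous_pow n))
  obtain ⟨u, hsu, hhu⟩ := (((hcont.tendsto h).eventually (gt_mem_nhds ((lt_cubeAvg_iff hh).mp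
    hsh))).filter_mono nhdsWithin_le_nhds |>.and (self_mem_nhdsWithin (s := Ioi h))).exists
  have hu : 0 < u := hh.trans hhu
  refine ⟨c, u, hu, mem_openCube_of_mem_zCube hx hhu, (lt_cubeAvg_iff hu).mpr ?_⟩
  exact hsu.trans_le (lintegral_mono_set (zCube_mono c hhu.le))

lemma isOpen_setOf_lt_maxE (g : Rn n → ℝ≥0∞) (s : ℝ≥0∞) : IsOpen {x | s < maxE g x} := by
  rcases eq_or_ne s ⊤ with rfl | hs_top
  · simp
  refine isOpen_iff_forall_mem_open.mpr fun x hx => ?_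
  obtain ⟨c, u, hu, hxu, hsu⟩ := exists_lt_cubeAvg_openCube hx hs_top
  exact ⟨openCube c u, fun y hy => hsu.trans_le (le_maxE hu (openCube_subset_zCube c u hy)),
    isOpen_openCube c u, hxu⟩

lemma measurable_maxE (g : Rn n → ℝ≥0∞) : Measurable (maxE g) :=
  measurable_of_Ioi fun s => (isOpen_setOf_lt_maxE g s).measurableSet

end MaximalFunction

section WeakType

variable {n : ℕ}

lemma exists_pairwiseDisjoint_zCube_cover {ι : Type*} (t : Finset ι) (c : ι → Rn n) (r : ι → ℝ)
    (hr : ∀ a ∈ t, 0 < r a) :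
    ∃ u ⊆ t, (u : Set ι).PairwiseDisjoint (fun a => zCube (c a) (r a)) ∧
      ⋃ a ∈ t, zCube (c a) (r a) ⊆ ⋃ b ∈ u, zCube (c b) (5 * r b) := by
  obtain ⟨U, hUt, hUdisj, hUcov⟩ := Vitali.exists_disjoint_subfamily_covering_enlargement
    (fun a => zCube (c a) (r a)) t r 2 one_lt_two (fun a ha => (hr a ha).le) (∑ a ∈ t, r a)
    (fun a ha => Finset.single_le_sum (fun b hb => (hr b hb).le) ha)
    (fun a ha => ⟨c a, fun i => by rw [sub_self, abs_zero]; linarith [hr a ha]⟩)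
  have hU : U.Finite := t.finite_toSet.subset hUt
  refine ⟨hU.toFinset, hU.toFinset_subset.mpr hUt, by rwa [hU.coe_toFinset], ?_⟩
  simp only [iUnion_subset_iff]
  intro a ha y hy
  obtain ⟨b, hbU, ⟨z, hza, hzb⟩, hab⟩ := hUcov a ha
  exact mem_biUnion (hU.mem_toFinset.mpr hbU)
    (zCube_mono _ (by linarith [hr a ha]) (zCube_subset_of_mem_of_mem hza hzb hy))

/-- Weak type `(1,1)`: Vitali covering (factor `5ⁿ`) on compact subsets of the open set
`{s < M g}`. -/
lemma mul_volume_setOf_lt_maxE_le (g : Rn n → ℝ≥0∞) (s : ℝ≥0∞) :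
    s * volume {x | s < maxE g x} ≤ 5 ^ n * ∫⁻ y, g y := by
  rcases eq_or_ne s ⊤ with rfl | hs_top
  · simp
  rw [(isOpen_setOf_lt_maxE g s).measure_eq_iSup_isCompact]
  simp only [ENNReal.mul_iSup]
  refine iSup_le fun K => iSup_le fun hKs => iSup_le fun hK => ?_
  choose c r hr hxr hsr using fun x : K => exists_lt_cubeAvg_openCube (hKs x.2) hs_top
  obtain ⟨t, hKt⟩ := hK.elim_finite_subcover (fun x : K => openCube (c x) (r x))
    (fun x => isOpen_openCube _ _) (fun x hx => mem_iUnion.mpr ⟨⟨x, hx⟩, hxr ⟨x, hx⟩⟩)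
  obtain ⟨u, -, hudisj, hucov⟩ := exists_pairwiseDisjoint_zCube_cover t c r (fun a _ => hr a)
  have hK5 : K ⊆ ⋃ b ∈ u, zCube (c b) (5 * r b) :=
    hKt.trans ((biUnion_mono subset_rfl fun a _ => openCube_subset_zCube _ _).trans hucov)
  have hcube : ∀ b,
      s * volume (zCube (c b) (5 * r b)) ≤ 5 ^ n * ∫⁻ y in zCube (c b) (r b), g y := by
    intro b
    have h5 : volume (zCube (c b) (5 * r b)) = 5 ^ n * ENNReal.ofReal (r b ^ n) := by
      rw [volume_zCube _ (by linarith [hr b]), mul_pow, ENNReal.ofReal_mul (by positivity),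
        ENNReal.ofReal_pow (by norm_num), ENNReal.ofReal_ofNat]
    rw [h5, mul_left_comm]
    exact mul_le_mul_right ((lt_cubeAvg_iff (hr b)).mp (hsr b)).le _
  calc s * volume K
      ≤ ∑ b ∈ u, s * volume (zCube (c b) (5 * r b)) := by
        rw [← Finset.mul_sum]
        exact mul_le_mul_right ((measure_mono hK5).trans (measure_biUnion_finset_le _ _)) s
    _ ≤ ∑ b ∈ u, 5 ^ n * ∫⁻ y in zCube (c b) (r b), g y := Finset.sum_le_sum fun b _ => hcube b
    _ = 5 ^ n * ∫⁻ y in ⋃ b ∈ u, zCube (c b) (r b), g y := by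
        rw [← Finset.mul_sum, lintegral_biUnion_finset hudisj (fun b _ => measurableSet_zCube _ _)]
    _ ≤ 5 ^ n * ∫⁻ y, g y := mul_le_mul_right (setLIntegral_le_lintegral _ _) _

lemma volume_setOf_lt_maxE_le (g : Rn n → ℝ≥0∞) {u : ℝ≥0∞} (hu : u ≠ 0) (hu_top : u ≠ ⊤) :
    volume {x | u < maxE g x} ≤ u⁻¹ * (5 ^ n * ∫⁻ y, g y) :=
  calc volume {x | u < maxE g x} = u⁻¹ * (u * volume {x | u < maxE g x}) :=
        (ENNReal.inv_mul_cancel_left hu hu_top).symm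
    _ ≤ u⁻¹ * (5 ^ n * ∫⁻ y, g y) := mul_le_mul_right (mul_volume_setOf_lt_maxE_le g u) _

end WeakType

section LayerCake

lemma volume_setOf_ofReal_lt_inter_Ioi (v : ℝ≥0∞) :
    volume ({t : ℝ | ENNReal.ofReal t < v} ∩ Ioi 0) = v := by
  rcases eq_or_ne v ⊤ with rfl | hv
  · simp [inter_eq_right.mpr (subset_univ _)]
  have : {t : ℝ | ENNReal.ofReal t < v} ∩ Ioi 0 = Ioo 0 v.toReal := by
    ext t
    simp only [mem_inter_iff, mem_ofPred_eq, mem_Ioi, mem_Ioo]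
    exact ⟨fun ⟨h₁, h₂⟩ => ⟨h₂, (ENNReal.ofReal_lt_iff_lt_toReal h₂.le hv).mp h₁⟩,
      fun ⟨h₁, h₂⟩ => ⟨(ENNReal.ofReal_lt_iff_lt_toReal h₁.le hv).mpr h₂, h₁⟩⟩
  rw [this, Real.volume_Ioo, sub_zero, ENNReal.ofReal_toReal hv]

lemma lintegral_eq_lintegral_measure_ofReal_lt {X : Type*} [MeasurableSpace X] (μ : Measure X)
    [SFinite μ] {G : X → ℝ≥0∞} (hG : Measurable G) :
    ∫⁻ y, G y ∂μ = ∫⁻ t in Ioi (0 : ℝ), μ {y | ENNReal.ofReal t < G y} := by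
  have hS : MeasurableSet {p : ℝ × X | ENNReal.ofReal p.1 < G p.2} :=
    measurableSet_lt (ENNReal.measurable_ofReal.comp measurable_fst) (hG.comp measurable_snd)
  refine Eq.trans ?_ ((Measure.prod_apply (μ := volume.restrict (Ioi 0)) (ν := μ) hS).symm.trans
    (Measure.prod_apply_symm hS)).symm
  refine lintegral_congr fun y => ?_
  change G y = volume.restrict (Ioi 0) {t : ℝ | ENNReal.ofReal t < G y}
  rw [Measure.restrict_apply (measurableSet_lt ENNReal.measurable_ofReal measurable_const)]
  exact (volume_setOf_ofReal_lt_inter_Ioi (G y)).symm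

end LayerCake

section Stein

variable {n : ℕ}

lemma lintegral_Ioo_inv_half {a b : ℝ} (ha : 0 < a) (hab : a ≤ b) :
    ∫⁻ t in Ioo a b, (ENNReal.ofReal (t / 2))⁻¹ = ENNReal.ofReal (2 * Real.log (b / a)) := by
  have hpos : ∀ t ∈ Icc a b, 0 < t := fun t ht => ha.trans_le ht.1
  rw [setLIntegral_congr_fun measurableSet_Ioo (g := fun t => ENNReal.ofReal (2 * t⁻¹))
    fun t ht => by
      rw [← ENNReal.ofReal_inv_of_pos (half_pos (hpos t (Ioo_subset_Icc_self ht))), inv_div,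
        div_eq_mul_inv]]
  have hcont : ContinuousOn (fun t : ℝ => 2 * t⁻¹) (Icc a b) :=
    continuousOn_const.mul (continuousOn_inv₀.mono fun t ht => (hpos t ht).ne')
  rw [← ofReal_integral_eq_lintegral_ofReal (hcont.integrableOn_Icc.mono_set Ioo_subset_Icc_self)
    ((ae_restrict_iff' measurableSet_Ioo).mpr (.of_forall fun t ht => by
      have := hpos t (Ioo_subset_Icc_self ht); positivity)),
    ← integral_Ioc_eq_integral_Ioo, ← intervalIntegral.integral_of_le hab,
    intervalIntegral.integral_const_mul, integral_inv_of_pos ha (ha.trans_le hab)]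

lemma zygFnE_zero : zygFnE 0 = 0 := by simp [zygFnE]

lemma zygFnE_top : zygFnE ⊤ = ⊤ :=
  ENNReal.top_mul (ne_of_gt (lt_of_lt_of_le one_pos le_self_add))

lemma self_le_zygFnE (u : ℝ≥0∞) : u ≤ zygFnE u :=
  le_mul_of_one_le_right' le_self_add

lemma maxE_le_maxE_indicator_add (g : Rn n → ℝ≥0∞) (u : ℝ≥0∞) (x : Rn n) :
    maxE g x ≤ maxE ({y | u < g y}.indicator g) x + u := by
  refine maxE_le fun c h hh hx => ?_
  have hsplit : ∀ y ∈ zCube c h, g y ≤ {y | u < g y}.indicator g y + u := by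
    intro y _
    by_cases hy : u < g y
    · simp [indicator_of_mem (show y ∈ {y | u < g y} from hy)]
    · simpa [indicator_of_notMem (show y ∉ {y | u < g y} from hy)] using hy
  calc cubeAvg g c h
      ≤ cubeAvg (fun y => {y | u < g y}.indicator g y + u) c h := cubeAvg_mono hsplit
    _ = cubeAvg ({y | u < g y}.indicator g) c h + u := cubeAvg_add_const _ c hh u
    _ ≤ maxE ({y | u < g y}.indicator g) x + u := add_le_add_left (le_maxE hh hx) u

lemma volume_setOf_two_mul_lt_maxE_le (g : Rn n → ℝ≥0∞) {u : ℝ≥0∞} (hu : u ≠ 0)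
    (hu_top : u ≠ ⊤) :
    volume {x | 2 * u < maxE g x}
      ≤ 5 ^ n * (u⁻¹ * ∫⁻ y, {y | u < g y}.indicator g y) := by
  have hsub : {x | 2 * u < maxE g x} ⊆ {x | u < maxE ({y | u < g y}.indicator g) x} := by
    intro x hx
    by_contra hle
    have := (maxE_le_maxE_indicator_add g u x).trans (add_le_add_left (not_lt.mp hle) u)
    exact absurd (hx.trans_le this) (by rw [two_mul]; exact lt_irrefl _)
  exact (measure_mono hsub).trans <|
    (volume_setOf_lt_maxE_le _ hu hu_top).trans_eq (mul_left_comm _ _ _)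

/-- The left side equals `2 v log⁺ (v/β)`. -/
lemma lintegral_Ioi_inv_mul_ite_le (v : ℝ≥0∞) {β : ℝ} (hβ : 0 < β) :
    ∫⁻ t in Ioi (2 * β), (ENNReal.ofReal (t / 2))⁻¹ * (if ENNReal.ofReal (t / 2) < v then v else 0)
      ≤ 2 * (ENNReal.ofReal β * zygFnE (v / ENNReal.ofReal β)) := by
  rcases le_or_gt v (ENNReal.ofReal β) with hv | hv
  · rw [setLIntegral_congr_fun measurableSet_Ioi (g := fun _ => 0) fun t ht => by
      rw [if_neg (not_lt.mpr (hv.trans (ENNReal.ofReal_le_ofReal (by linarith [ht.out])))),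
        mul_zero]]
    simp
  rcases eq_or_ne v ⊤ with rfl | hv_top
  · rw [ENNReal.top_div_of_ne_top ENNReal.ofReal_ne_top, zygFnE_top,
      ENNReal.mul_top (ENNReal.ofReal_pos.mpr hβ).ne', ENNReal.mul_top two_ne_zero]
    exact le_top
  have hβv : β < v.toReal := (ENNReal.ofReal_lt_iff_lt_toReal hβ.le hv_top).mp hv
  have hset : {t : ℝ | ENNReal.ofReal (t / 2) < v} ∩ Ioi (2 * β) = Ioo (2 * β) (2 * v.toReal) := by
    ext t
    simp only [mem_inter_iff, mem_ofPred_eq, mem_Ioi, mem_Ioo]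
    constructor
    · rintro ⟨h₁, h₂⟩
      exact ⟨h₂, by linarith [(ENNReal.ofReal_lt_iff_lt_toReal (by linarith) hv_top).mp h₁]⟩
    · rintro ⟨h₁, h₂⟩
      exact ⟨(ENNReal.ofReal_lt_iff_lt_toReal (by linarith) hv_top).mpr (by linarith), h₁⟩
  have hvβ : ENNReal.ofReal β * (v / ENNReal.ofReal β) = v :=
    ENNReal.mul_div_cancel (ENNReal.ofReal_pos.mpr hβ).ne' ENNReal.ofReal_ne_top
  have hratio : (v / ENNReal.ofReal β).toReal = v.toReal / β := by
    rw [ENNReal.toReal_div, ENNReal.toReal_ofReal hβ.le]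
  calc ∫⁻ t in Ioi (2 * β),
        (ENNReal.ofReal (t / 2))⁻¹ * (if ENNReal.ofReal (t / 2) < v then v else 0)
      = ∫⁻ t in Ioi (2 * β), {t : ℝ | ENNReal.ofReal (t / 2) < v}.indicator
          (fun t => (ENNReal.ofReal (t / 2))⁻¹ * v) t := by
        simp only [indicator_apply, mem_ofPred_eq, mul_ite, mul_zero]
    _ = ENNReal.ofReal (2 * Real.log (v.toReal / β)) * v := by
        rw [lintegral_indicator (measurableSet_lt (by fun_prop) measurable_const),
          Measure.restrict_restrict (measurableSet_lt (by fun_prop) measurable_const), hset,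
          lintegral_mul_const' _ _ hv_top, lintegral_Ioo_inv_half (by linarith) (by linarith),
          mul_div_mul_left _ _ two_ne_zero]
    _ ≤ 2 * (v * (1 + ENNReal.ofReal (logPlus (v.toReal / β)))) := by
        rw [ENNReal.ofReal_mul zero_le_two, ENNReal.ofReal_ofNat, mul_assoc, mul_comm _ v]
        gcongr
        exact (ENNReal.ofReal_le_ofReal (le_max_left _ _)).trans le_add_self
    _ = 2 * (ENNReal.ofReal β * zygFnE (v / ENNReal.ofReal β)) := by
        rw [zygFnE, hratio, ← mul_assoc (ENNReal.ofReal β), hvβ]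

/-- Stein's `L log L` inequality: layer cake formula split at height `2β`, and above it the weak
type `(1,1)` bound applied to the part of `g` above `t/2`. -/
lemma setLIntegral_maxE_le (g : Rn n → ℝ≥0∞) (hg : Measurable g) (s : Set (Rn n)) {β : ℝ}
    (hβ : 0 < β) :
    ∫⁻ y in s, maxE g y
      ≤ 2 * ENNReal.ofReal β * (volume s + 5 ^ n * ∫⁻ y, zygFnE (g y / ENNReal.ofReal β)) := by
  set gt : ℝ → Rn n → ℝ≥0∞ := fun t y => if ENNReal.ofReal (t / 2) < g y then g y else 0
  have hgt : Measurable (Function.uncurry gt) :=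
    Measurable.ite (measurableSet_lt (by fun_prop) (hg.comp measurable_snd))
      (hg.comp measurable_snd) measurable_const
  have htail : ∀ t ∈ Ioi (2 * β), volume.restrict s {y | ENNReal.ofReal t < maxE g y}
      ≤ 5 ^ n * ∫⁻ y, (ENNReal.ofReal (t / 2))⁻¹ * gt t y := by
    intro t ht
    have ht2 : 0 < t / 2 := by linarith [ht.out]
    have htwo : ENNReal.ofReal t = 2 * ENNReal.ofReal (t / 2) := by
      rw [← ENNReal.ofReal_ofNat 2, ← ENNReal.ofReal_mul zero_le_two, mul_div_cancel₀ t two_ne_zero]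
    have := volume_setOf_two_mul_lt_maxE_le g (ENNReal.ofReal_pos.mpr ht2).ne' ENNReal.ofReal_ne_top
    simp only [indicator_apply, mem_ofPred_eq] at this
    rw [lintegral_const_mul (f := gt t) _ (hgt.comp measurable_prodMk_left), htwo]
    exact (Measure.restrict_apply_le _ _).trans this
  rw [lintegral_eq_lintegral_measure_ofReal_lt _ (measurable_maxE g),
    ← Ioc_union_Ioi_eq_Ioi (by linarith : (0 : ℝ) ≤ 2 * β),
    lintegral_union measurableSet_Ioi (Ioc_disjoint_Ioi le_rfl), mul_add]
  gcongr
  · calc ∫⁻ t in Ioc 0 (2 * β), volume.restrict s {y | ENNReal.ofReal t < maxE g y}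
        ≤ ∫⁻ _ in Ioc 0 (2 * β), volume s :=
          lintegral_mono fun t => (measure_mono (subset_univ _)).trans_eq
            (Measure.restrict_apply_univ s)
      _ = 2 * ENNReal.ofReal β * volume s := by
          rw [setLIntegral_const, Real.volume_Ioc, sub_zero, ENNReal.ofReal_mul zero_le_two,
            ENNReal.ofReal_ofNat, mul_comm]
  · calc ∫⁻ t in Ioi (2 * β), volume.restrict s {y | ENNReal.ofReal t < maxE g y}
        ≤ ∫⁻ t in Ioi (2 * β), 5 ^ n * ∫⁻ y, (ENNReal.ofReal (t / 2))⁻¹ * gt t y :=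
          setLIntegral_mono' measurableSet_Ioi htail
      _ = 5 ^ n * ∫⁻ y, ∫⁻ t in Ioi (2 * β), (ENNReal.ofReal (t / 2))⁻¹ * gt t y := by
          rw [lintegral_const_mul' _ _ (ENNReal.pow_ne_top ENNReal.ofNat_ne_top),
            lintegral_lintegral_swap (((by fun_prop : Measurable fun p : ℝ × Rn n =>
              (ENNReal.ofReal (p.1 / 2))⁻¹).mul hgt).aemeasurable)]
      _ ≤ 5 ^ n * ∫⁻ y, 2 * (ENNReal.ofReal β * zygFnE (g y / ENNReal.ofReal β)) := by
          gcongr with y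
          exact lintegral_Ioi_inv_mul_ite_le (g y) hβ
      _ = 2 * ENNReal.ofReal β * (5 ^ n * ∫⁻ y, zygFnE (g y / ENNReal.ofReal β)) := by
          rw [lintegral_const_mul' _ _ ENNReal.ofNat_ne_top,
            lintegral_const_mul' _ _ ENNReal.ofReal_ne_top]
          ring

end Stein

section MorreyBounds

variable {n : ℕ}

def l1MorreyE (lam : ℝ) (g : Rn n → ℝ≥0∞) : ℝ≥0∞ :=
  ⨆ (c : Rn n) (h : ℝ) (_ : 0 < h), ENNReal.ofReal (h ^ lam) * cubeAvg g c h

lemma ofReal_rpow_neg_mul_ofReal_rpow {h : ℝ} (hh : 0 < h) (lam : ℝ) :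
    ENNReal.ofReal (h ^ (-lam)) * ENNReal.ofReal (h ^ lam) = 1 := by
  rw [← ENNReal.ofReal_mul (Real.rpow_nonneg hh.le _), ← Real.rpow_add hh, neg_add_cancel,
    Real.rpow_zero, ENNReal.ofReal_one]

lemma le_ofReal_rpow_neg_mul_iSup (lam : ℝ) (F : Rn n → ℝ → ℝ≥0∞) (c : Rn n) {h : ℝ}
    (hh : 0 < h) :
    F c h ≤ ENNReal.ofReal (h ^ (-lam)) *
      ⨆ (c : Rn n) (h : ℝ) (_ : 0 < h), ENNReal.ofReal (h ^ lam) * F c h :=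
  calc F c h = ENNReal.ofReal (h ^ (-lam)) * (ENNReal.ofReal (h ^ lam) * F c h) := by
        rw [← mul_assoc, ofReal_rpow_neg_mul_ofReal_rpow hh, one_mul]
    _ ≤ _ := mul_le_mul_right (le_iSup₂_of_le c h
        (le_iSup_of_le (f := fun _ : 0 < h => ENNReal.ofReal (h ^ lam) * F c h) hh le_rfl)) _

lemma iSup_ofReal_rpow_mul_le {lam : ℝ} {F : Rn n → ℝ → ℝ≥0∞} {A : ℝ≥0∞}
    (hF : ∀ c h, 0 < h → F c h ≤ ENNReal.ofReal (h ^ (-lam)) * A) :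
    ⨆ (c : Rn n) (h : ℝ) (_ : 0 < h), ENNReal.ofReal (h ^ lam) * F c h ≤ A :=
  iSup₂_le fun c h => iSup_le fun hh =>
    calc ENNReal.ofReal (h ^ lam) * F c h
        ≤ ENNReal.ofReal (h ^ lam) * (ENNReal.ofReal (h ^ (-lam)) * A) :=
          mul_le_mul_right (hF c h hh) _
      _ = A := by rw [← mul_assoc, mul_comm (ENNReal.ofReal _), ofReal_rpow_neg_mul_ofReal_rpow hh,
          one_mul]

lemma iSup_ge_le_ofReal_rpow_neg_mul_iSup {lam : ℝ} (hlam : 0 ≤ lam) (F : Rn n → ℝ → ℝ≥0∞)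
    (c : Rn n) {h : ℝ} (hh : 0 < h) :
    ⨆ (H : ℝ) (_ : h ≤ H), F c H ≤ ENNReal.ofReal (h ^ (-lam)) *
      ⨆ (c : Rn n) (h : ℝ) (_ : 0 < h), ENNReal.ofReal (h ^ lam) * F c h :=
  iSup₂_le fun _ hH => (le_ofReal_rpow_neg_mul_iSup lam F c (hh.trans_le hH)).trans <|
    mul_le_mul_left (ENNReal.ofReal_le_ofReal
      (Real.rpow_le_rpow_of_nonpos hh hH (neg_nonpos.mpr hlam))) _

lemma zygMorreyE_congr_ae (lam : ℝ) {g g' : Rn n → ℝ≥0∞} (hgg : g =ᵐ[volume] g') :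
    zygMorreyE lam g = zygMorreyE lam g' := by
  have : ∀ (s : Set (Rn n)) (a : ℝ≥0∞),
      ∫⁻ y in s, zygFnE (g y / a) = ∫⁻ y in s, zygFnE (g' y / a) := fun s a =>
    lintegral_congr_ae (ae_restrict_of_ae (hgg.mono fun y hy => by simp only [hy]))
  simp only [zygMorreyE, zygAvgE, this]

lemma le_mul_zygAvgE {g : Rn n → ℝ≥0∞} {c : Rn n} {H : ℝ} {X K : ℝ≥0∞} (hK₀ : K ≠ 0)
    (hK : K ≠ ⊤) (hX : ∀ α : ℝ, 0 < α →
      (ENNReal.ofReal (H ^ n))⁻¹ * ∫⁻ y in zCube c H, zygFnE (g y / ENNReal.ofReal α) ≤ 1 →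
        X ≤ K * ENNReal.ofReal α) :
    X ≤ K * zygAvgE g c H :=
  (ENNReal.div_le_iff' hK₀ hK).mp <| le_sInf fun _ ⟨α, hα, ha, hadm⟩ =>
    ha ▸ (ENNReal.div_le_iff' hK₀ hK).mpr (hX α hα hadm)

lemma cubeAvg_le_zygAvgE (g : Rn n → ℝ≥0∞) (c : Rn n) (H : ℝ) :
    cubeAvg g c H ≤ zygAvgE g c H := by
  simpa using le_mul_zygAvgE (X := cubeAvg g c H) one_ne_zero ENNReal.one_ne_top fun α hα hadm =>
    calc cubeAvg g c H = ENNReal.ofReal α * cubeAvg (fun y => g y / ENNReal.ofReal α) c H := by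
          rw [cubeAvg, cubeAvg, mul_left_comm, ← lintegral_const_mul' _ _ ENNReal.ofReal_ne_top]
          simp only [ENNReal.mul_div_cancel (ENNReal.ofReal_pos.mpr hα).ne' ENNReal.ofReal_ne_top]
      _ ≤ ENNReal.ofReal α * cubeAvg (fun y => zygFnE (g y / ENNReal.ofReal α)) c H :=
          mul_le_mul_right (cubeAvg_mono fun y _ => self_le_zygFnE _) _
      _ ≤ ENNReal.ofReal α * 1 := mul_le_mul_right hadm _
      _ = 1 * ENNReal.ofReal α := mul_comm _ _

lemma cubeAvg_maxE_indicator_le_zygAvgE (g : Rn n → ℝ≥0∞) (hg : Measurable g) (c : Rn n)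
    {H : ℝ} (hH : 0 < H) :
    cubeAvg (maxE ((zCube c H).indicator g)) c H ≤ 2 * (1 + 5 ^ n) * zygAvgE g c H := by
  refine le_mul_zygAvgE (by positivity) (by finiteness) fun α hα hadm => ?_
  have hind : (fun y => zygFnE ((zCube c H).indicator g y / ENNReal.ofReal α))
      = (zCube c H).indicator fun y => zygFnE (g y / ENNReal.ofReal α) := by
    funext y
    by_cases hy : y ∈ zCube c H <;> simp [hy, zygFnE_zero]
  calc cubeAvg (maxE ((zCube c H).indicator g)) c H
      ≤ (ENNReal.ofReal (H ^ n))⁻¹ * (2 * ENNReal.ofReal α * (volume (zCube c H) + 5 ^ n *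
          ∫⁻ y, zygFnE ((zCube c H).indicator g y / ENNReal.ofReal α))) :=
        mul_le_mul_right (setLIntegral_maxE_le _ (hg.indicator (measurableSet_zCube c H)) _ hα) _
    _ = 2 * ENNReal.ofReal α * (1 + 5 ^ n * ((ENNReal.ofReal (H ^ n))⁻¹ *
          ∫⁻ y in zCube c H, zygFnE (g y / ENNReal.ofReal α))) := by
        rw [hind, lintegral_indicator (measurableSet_zCube c H), volume_zCube c hH.le,
          mul_left_comm, mul_add, ENNReal.inv_mul_cancel (ofReal_pow_ne_zero hH)
            ENNReal.ofReal_ne_top, mul_left_comm _ (5 ^ n)]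
    _ ≤ 2 * ENNReal.ofReal α * (1 + 5 ^ n * 1) := by gcongr
    _ = 2 * (1 + 5 ^ n) * ENNReal.ofReal α := by ring

lemma cubeAvg_le_ofReal_pow_mul_cubeAvg (g : Rn n → ℝ≥0∞) {c c' : Rn n} {u k : ℝ} (hu : 0 < u)
    (hk : 0 < k) (hsub : zCube c u ⊆ zCube c' (k * u)) :
    cubeAvg g c u ≤ ENNReal.ofReal (k ^ n) * cubeAvg g c' (k * u) := by
  calc cubeAvg g c u ≤ (ENNReal.ofReal (u ^ n))⁻¹ * ∫⁻ y in zCube c' (k * u), g y :=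
        mul_le_mul_right (lintegral_mono_set hsub) _
    _ = ENNReal.ofReal (k ^ n) * cubeAvg g c' (k * u) := by
        rw [lintegral_zCube_eq_mul_cubeAvg g c' (mul_pos hk hu), mul_pow,
          ENNReal.ofReal_mul (by positivity), mul_comm (ENNReal.ofReal (k ^ n)), mul_assoc,
          ENNReal.inv_mul_cancel_left (ofReal_pow_ne_zero hu) ENNReal.ofReal_ne_top]

/-- On a cube `Q`, cubes of side `≤ h` through a point of `Q` stay inside `3Q`; larger ones sit
in a concentric cube three times their size. -/
lemma maxE_le_maxE_indicator_add_iSup (g : Rn n → ℝ≥0∞) (c₀ : Rn n) {h : ℝ} (hh : 0 < h)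
    {x : Rn n} (hx : x ∈ zCube c₀ h) :
    maxE g x ≤ maxE ((zCube c₀ (3 * h)).indicator g) x
      + 3 ^ n * ⨆ (H : ℝ) (_ : h ≤ H), cubeAvg g c₀ H := by
  refine maxE_le fun c u hu hxu => ?_
  rcases le_or_gt u h with huh | huh
  · have hsub : zCube c u ⊆ zCube c₀ (3 * h) :=
      (zCube_subset_of_mem_of_mem hxu hx).trans (zCube_mono _ (by linarith))
    refine le_add_right ((cubeAvg_mono fun y hy => ?_).trans (le_maxE hu hxu))
    rw [indicator_of_mem (hsub hy)]
  · have hsub : zCube c u ⊆ zCube c₀ (3 * u) :=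
      (zCube_subset_of_mem_of_mem hxu hx).trans (zCube_mono _ (by linarith))
    refine le_add_left ((cubeAvg_le_ofReal_pow_mul_cubeAvg g hu three_pos hsub).trans ?_)
    rw [ENNReal.ofReal_pow zero_le_three, ENNReal.ofReal_ofNat]
    exact mul_le_mul_right (le_iSup₂_of_le (f := fun H (_ : h ≤ H) => cubeAvg g c₀ H) (3 * u)
      (by linarith) le_rfl) _

end MorreyBounds

section MaximalOperatorBounds

variable {n : ℕ}

/-- Split `g` near and far from the cube: Stein's inequality near it, the Morrey decay `H^{-λ}`
far from it. -/
lemma l1MorreyE_maxE_le {lam : ℝ} (hlam : 0 ≤ lam) (g : Rn n → ℝ≥0∞) (hg : Measurable g) :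
    l1MorreyE lam (maxE g) ≤ 3 ^ n * (3 + 2 * 5 ^ n) * zygMorreyE lam g := by
  refine iSup_ofReal_rpow_mul_le fun c H hH => ?_
  set X := ENNReal.ofReal (H ^ (-lam)) * zygMorreyE lam g
  have hfar : ⨆ (H' : ℝ) (_ : H ≤ H'), zygAvgE g c H' ≤ X :=
    iSup_ge_le_ofReal_rpow_neg_mul_iSup hlam (zygAvgE g) c hH
  have hnear : cubeAvg (maxE ((zCube c (3 * H)).indicator g)) c H
      ≤ 3 ^ n * (2 * (1 + 5 ^ n) * X) := by
    calc cubeAvg (maxE ((zCube c (3 * H)).indicator g)) c H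
        ≤ ENNReal.ofReal (3 ^ n) * cubeAvg (maxE ((zCube c (3 * H)).indicator g)) c (3 * H) :=
          cubeAvg_le_ofReal_pow_mul_cubeAvg _ hH three_pos (zCube_mono c (by linarith))
      _ ≤ 3 ^ n * (2 * (1 + 5 ^ n) * zygAvgE g c (3 * H)) := by
          rw [ENNReal.ofReal_pow zero_le_three, ENNReal.ofReal_ofNat]
          exact mul_le_mul_right (cubeAvg_maxE_indicator_le_zygAvgE g hg c (by linarith)) _
      _ ≤ 3 ^ n * (2 * (1 + 5 ^ n) * X) := by
          gcongr
          exact (le_iSup₂_of_le (f := fun H' (_ : H ≤ H') => zygAvgE g c H') (3 * H)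
            (by linarith) le_rfl).trans hfar
  calc cubeAvg (maxE g) c H
      ≤ cubeAvg (fun y => maxE ((zCube c (3 * H)).indicator g) y + 3 ^ n * X) c H :=
        cubeAvg_mono fun y hy => (maxE_le_maxE_indicator_add_iSup g c hH hy).trans
          (add_le_add_right (mul_le_mul_right ((iSup₂_mono fun H' _ =>
            cubeAvg_le_zygAvgE g c H').trans hfar) _) _)
    _ ≤ 3 ^ n * (2 * (1 + 5 ^ n) * X) + 3 ^ n * X := by
        rw [cubeAvg_add_const _ c hH]; exact add_le_add_left hnear _
    _ = ENNReal.ofReal (H ^ (-lam)) * (3 ^ n * (3 + 2 * 5 ^ n) * zygMorreyE lam g) := by ring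

end MaximalOperatorBounds

section WeakMorrey

variable {n : ℕ}

/-- Uses `1/t ≤ (1/t)(1 + log⁺(1/t))`; the slack `ε` keeps the admissible `α` positive when
`b = 0`. -/
lemma weakZygAvgE_le_of_volume_le {G : Rn n → ℝ≥0∞} {c : Rn n} {h b : ℝ} (hh : 0 < h)
    (hb : 0 ≤ b) (hG : ∀ s : ℝ, 0 < s →
      volume {x ∈ zCube c h | ENNReal.ofReal s < G x} ≤ ENNReal.ofReal (b * h ^ n / s)) :
    weakZygAvgE G c h ≤ ENNReal.ofReal b := by
  refine ENNReal.le_of_forall_pos_le_add fun ε hε _ => ?_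
  have hα : 0 < b + ε := add_pos_of_nonneg_of_pos hb (by exact_mod_cast hε)
  rw [← ENNReal.ofReal_coe_nnreal, ← ENNReal.ofReal_add hb ε.coe_nonneg]
  refine sInf_le ⟨b + ε, hα, rfl, fun t ht => ?_⟩
  have hbt : b / ((b + ε) * t) ≤ 1 / t * (1 + logPlus (1 / t)) :=
    calc b / ((b + ε) * t) ≤ (b + ε) / ((b + ε) * t) := by gcongr; linarith [ε.coe_nonneg]
      _ = 1 / t := by field_simp
      _ ≤ 1 / t * (1 + logPlus (1 / t)) :=
          le_mul_of_one_le_right (by positivity) (le_add_of_nonneg_right (le_max_right _ _))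
  calc (ENNReal.ofReal (h ^ n))⁻¹ * volume {x ∈ zCube c h | ENNReal.ofReal ((b + ε) * t) < G x}
      ≤ (ENNReal.ofReal (h ^ n))⁻¹ * ENNReal.ofReal (b * h ^ n / ((b + ε) * t)) :=
        mul_le_mul_right (hG _ (by positivity)) _
    _ = ENNReal.ofReal (b / ((b + ε) * t)) := by
        rw [← ENNReal.ofReal_inv_of_pos (pow_pos hh n), ← ENNReal.ofReal_mul (by positivity)]
        congr 1
        field_simp
    _ ≤ ENNReal.ofReal (1 / t * (1 + logPlus (1 / t))) := ENNReal.ofReal_le_ofReal hbt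

/-- Above the level `2·15ⁿ a h^{-λ}` the part of `F` outside `3Q` contributes at most `s/2` to
`M F` on `Q`, and the weak `(1,1)` inequality handles the rest; below it `|Q|` is a bound. -/
lemma volume_setOf_lt_maxE_inter_zCube_le {lam : ℝ} (hlam : 0 ≤ lam) (F : Rn n → ℝ≥0∞)
    {a : ℝ} (ha : 0 ≤ a) (hF : l1MorreyE lam F ≤ ENNReal.ofReal a) (c : Rn n) {h s : ℝ}
    (hh : 0 < h) (hs : 0 < s) :
    volume {x ∈ zCube c h | ENNReal.ofReal s < maxE F x}
      ≤ ENNReal.ofReal (2 * 15 ^ n * a * h ^ (-lam) * h ^ n / s) := by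
  set B := 2 * 15 ^ n * a * h ^ (-lam)
  have hhl : 0 < h ^ (-lam) := Real.rpow_pos_of_pos hh _
  rcases le_or_gt s B with hsB | hBs
  · calc volume {x ∈ zCube c h | ENNReal.ofReal s < maxE F x}
        ≤ volume (zCube c h) := measure_mono (sep_subset _ _)
      _ = ENNReal.ofReal (h ^ n) := volume_zCube c hh.le
      _ ≤ ENNReal.ofReal (B * h ^ n / s) := ENNReal.ofReal_le_ofReal <| by
          rw [le_div_iff₀ hs, mul_comm]; exact mul_le_mul_of_nonneg_right hsB (by positivity)
  have h15 : (15 : ℝ) ^ n = 3 ^ n * 5 ^ n := by rw [← mul_pow]; norm_num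
  have hfar : 3 ^ n * ⨆ (H : ℝ) (_ : h ≤ H), cubeAvg F c H ≤ ENNReal.ofReal (s / 2) :=
    calc 3 ^ n * ⨆ (H : ℝ) (_ : h ≤ H), cubeAvg F c H
        ≤ 3 ^ n * (ENNReal.ofReal (h ^ (-lam)) * ENNReal.ofReal a) :=
          mul_le_mul_right ((iSup_ge_le_ofReal_rpow_neg_mul_iSup hlam (cubeAvg F) c hh).trans
            (mul_le_mul_right hF _)) _
      _ = ENNReal.ofReal (3 ^ n * (h ^ (-lam) * a)) := by
          rw [ENNReal.ofReal_mul (by positivity), ENNReal.ofReal_mul hhl.le,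
            ENNReal.ofReal_pow zero_le_three, ENNReal.ofReal_ofNat]
      _ ≤ ENNReal.ofReal (s / 2) := ENNReal.ofReal_le_ofReal <| by
          have : (3 : ℝ) ^ n ≤ 15 ^ n := by gcongr; norm_num
          nlinarith [mul_nonneg hhl.le ha]
  have hsub : {x ∈ zCube c h | ENNReal.ofReal s < maxE F x}
      ⊆ {x | ENNReal.ofReal (s / 2) < maxE ((zCube c (3 * h)).indicator F) x} := by
    rintro x ⟨hxQ, hxs⟩
    by_contra hle
    refine hxs.not_ge ((maxE_le_maxE_indicator_add_iSup F c hh hxQ).trans ?_)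
    rw [← add_halves s, ENNReal.ofReal_add (by positivity) (by positivity)]
    exact add_le_add (not_lt.mp hle) hfar
  have hnear : ∫⁻ y, (zCube c (3 * h)).indicator F y
      ≤ ENNReal.ofReal ((3 * h) ^ n) * (ENNReal.ofReal ((3 * h) ^ (-lam)) * ENNReal.ofReal a) := by
    rw [lintegral_indicator (measurableSet_zCube _ _),
      lintegral_zCube_eq_mul_cubeAvg F c (by linarith : 0 < 3 * h)]
    exact mul_le_mul_right ((le_ofReal_rpow_neg_mul_iSup lam (cubeAvg F) c (by linarith)).trans
      (mul_le_mul_right hF _)) _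
  calc volume {x ∈ zCube c h | ENNReal.ofReal s < maxE F x}
      ≤ (ENNReal.ofReal (s / 2))⁻¹ * (5 ^ n * ∫⁻ y, (zCube c (3 * h)).indicator F y) :=
        (measure_mono hsub).trans (volume_setOf_lt_maxE_le _
          (ENNReal.ofReal_pos.mpr (half_pos hs)).ne' ENNReal.ofReal_ne_top)
    _ ≤ (ENNReal.ofReal (s / 2))⁻¹ * (5 ^ n * (ENNReal.ofReal ((3 * h) ^ n) *
          (ENNReal.ofReal ((3 * h) ^ (-lam)) * ENNReal.ofReal a))) := by gcongr
    _ = ENNReal.ofReal (2 * 15 ^ n * a * h ^ n / s * (3 * h) ^ (-lam)) := by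
        rw [← ENNReal.ofReal_mul (by positivity), ← ENNReal.ofReal_mul (by positivity),
          ← ENNReal.ofReal_ofNat, ← ENNReal.ofReal_pow (by norm_num),
          ← ENNReal.ofReal_mul (by positivity),
          ← ENNReal.ofReal_inv_of_pos (half_pos hs), ← ENNReal.ofReal_mul (by positivity), h15]
        congr 1
        field_simp
        ring
    _ ≤ ENNReal.ofReal (B * h ^ n / s) := ENNReal.ofReal_le_ofReal <| by
        rw [show B * h ^ n / s = 2 * 15 ^ n * a * h ^ n / s * h ^ (-lam) by ring]
        exact mul_le_mul_of_nonneg_left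
          (Real.rpow_le_rpow_of_nonpos hh (by linarith) (neg_nonpos.mpr hlam)) (by positivity)

lemma weakZygMorreyE_maxE_le {lam : ℝ} (hlam : 0 ≤ lam) (F : Rn n → ℝ≥0∞) :
    weakZygMorreyE lam (maxE F) ≤ 2 * 15 ^ n * l1MorreyE lam F := by
  rcases eq_or_ne (l1MorreyE lam F) ⊤ with hA | hA
  · rw [hA, ENNReal.mul_top (by positivity)]
    exact le_top
  have hFa : l1MorreyE lam F = ENNReal.ofReal (l1MorreyE lam F).toReal :=
    (ENNReal.ofReal_toReal hA).symm
  refine iSup_ofReal_rpow_mul_le fun c h hh => ?_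
  calc weakZygAvgE (maxE F) c h
      ≤ ENNReal.ofReal (2 * 15 ^ n * (l1MorreyE lam F).toReal * h ^ (-lam)) :=
        weakZygAvgE_le_of_volume_le hh (by positivity) fun s hs =>
          volume_setOf_lt_maxE_inter_zCube_le hlam F ENNReal.toReal_nonneg hFa.le c hh hs
    _ = ENNReal.ofReal (h ^ (-lam)) * (2 * 15 ^ n * l1MorreyE lam F) := by
        rw [hFa, ENNReal.toReal_ofReal ENNReal.toReal_nonneg, mul_comm,
          ENNReal.ofReal_mul (Real.rpow_nonneg hh.le _), ENNReal.ofReal_mul (by positivity),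
          ENNReal.ofReal_mul (by positivity), ENNReal.ofReal_pow (by norm_num),
          ENNReal.ofReal_ofNat, ENNReal.ofReal_ofNat]

theorem weakZygMorreyE_maxE_maxE_le {lam : ℝ} (hlam : 0 ≤ lam) (g : Rn n → ℝ≥0∞)
    (hg : Measurable g) :
    weakZygMorreyE lam (maxE (maxE g))
      ≤ 2 * 15 ^ n * (3 ^ n * (3 + 2 * 5 ^ n)) * zygMorreyE lam g :=
  calc weakZygMorreyE lam (maxE (maxE g)) ≤ 2 * 15 ^ n * l1MorreyE lam (maxE g) :=
        weakZygMorreyE_maxE_le hlam _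
    _ ≤ 2 * 15 ^ n * (3 ^ n * (3 + 2 * 5 ^ n) * zygMorreyE lam g) :=
        mul_le_mul_right (l1MorreyE_maxE_le hlam g hg) _
    _ = _ := (mul_assoc _ _ _).symm

end WeakMorrey

theorem stmt16_general (n : ℕ) (lam : ℝ) (hlam0 : 0 < lam) :
    ∃ c : ℝ, 0 < c ∧ ∀ f : Rn n → ℝ, MeasureTheory.LocallyIntegrable f volume →
      weakZygMorreyE lam (maxE (HLM f)) ≤ ENNReal.ofReal c * zygMorrey lam f := by
  refine ⟨2 * 15 ^ n * (3 ^ n * (3 + 2 * 5 ^ n)), by positivity, fun f hf => ?_⟩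
  have hg : AEMeasurable fun y => ENNReal.ofReal |f y| :=
    hf.aestronglyMeasurable.aemeasurable.abs.ennreal_ofReal
  have hc : ENNReal.ofReal (2 * 15 ^ n * (3 ^ n * (3 + 2 * 5 ^ n)))
      = 2 * 15 ^ n * (3 ^ n * (3 + 2 * 5 ^ n)) := by
    exact_mod_cast ENNReal.ofReal_natCast _
  unfold HLM zygMorrey
  rw [maxE_congr_ae hg.ae_eq_mk, zygMorreyE_congr_ae lam hg.ae_eq_mk, hc]
  exact weakZygMorreyE_maxE_maxE_le hlam0.le _ hg.measurable_mk

/-- Let `0 < λ < n`. The iterated maximal operator `M² = M ∘ M` is bounded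
from the Zygmund–Morrey space `M_{L(1+log⁺L),λ}(ℝⁿ)` to the weak Zygmund–Morrey space
`WM_{L(1+log⁺L),λ}(ℝⁿ)`. -/
theorem stmt16 (n : ℕ) (lam : ℝ) (hlam0 : 0 < lam) (hlamn : lam < (n : ℝ)) :
    ∃ c : ℝ, 0 < c ∧ ∀ f : Rn n → ℝ, MeasureTheory.LocallyIntegrable f volume →
      weakZygMorreyE lam (maxE (HLM f)) ≤ ENNReal.ofReal c * zygMorrey lam f :=
  stmt16_general n lam hlam0

end
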